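/- For all reals 0 ≤ v_0 ≤ v_1, the pure local strategy profile for NC_00(C_5) in which players 0, 1, 2, 3 each use the NOT function (f_i(x) = 1 − x) and player 4 uses the constant function 1 is a Nash equilibrium of NC_00(C_5) with the uniform type distribution; under this profile the expected payoff of each of players 0, 1, 2, 3 equals (2v_0 + 3v_1)/6 and the expected payoff of player 4 equals 5v_1/6. -/

import Mathlib

open Finset

/-- The 6 questions/types of the game on the 5-cycle: `none` is `Tₐ = 11111`;
`some i` is the question `Tᵢ` giving input bit 1 to player `i` and 0 to the others. -/
abbrev C5Type := Option (ZMod 5)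

/-- Input (type) bit of player `j` in question `t` of `MCG(C₅)`/`NC₀₀(C₅)`. -/
def inputBit : C5Type → ZMod 5 → ZMod 2
  | none, _ => 1
  | some i, j => if j = i then 1 else 0

/-- The involved set of question `t`: all five players for `Tₐ`;
`{i-1, i, i+1}` for `Tᵢ`. -/
def involvedSet : C5Type → Finset (ZMod 5)
  | none => Finset.univ
  | some i => {i - 1, i, i + 1}

/-- The target parity bit of question `t`: `1` for `Tₐ` and `0` for each `Tᵢ`. -/
def targetBit : C5Type → ZMod 2
  | none => 1
  | some _ => 0

/-- Payoff of player `j` on (answer profile `s`, type `t`) in `NC₀₀(C₅)`: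
`v_{s j}` if `s` wins on `t`, else `0`. -/
noncomputable def payoffOf (v0 v1 : ℝ) (j : ZMod 5) (s : ZMod 5 → ZMod 2)
    (t : C5Type) : ℝ :=
  if ∑ k ∈ involvedSet t, s k = targetBit t then (if s j = 1 then v1 else v0) else 0

/-- Expected payoff of player `j` under the pure local strategy profile `f`
(player `i` answers `f i b` on type bit `b`), with the type uniform on the 6 types. -/
noncomputable def pureUtil (v0 v1 : ℝ) (f : ZMod 5 → ZMod 2 → ZMod 2) (j : ZMod 5) : ℝ :=
  (∑ t : C5Type, payoffOf v0 v1 j (fun i => f i (inputBit t i)) t) / 6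

/-- The pure local strategy profile `f` is a Nash equilibrium of `NC₀₀(C₅)` with
the uniform type distribution: no player can strictly increase their expected
payoff by unilaterally replacing their local function. -/
def IsNashEq (v0 v1 : ℝ) (f : ZMod 5 → ZMod 2 → ZMod 2) : Prop :=
  ∀ (i : ZMod 5) (g : ZMod 2 → ZMod 2),
    pureUtil v0 v1 (Function.update f i g) i ≤ pureUtil v0 v1 f i

/-- The profile `(NOT, NOT, NOT, NOT, 1)`: players `0,1,2,3` answer the negation
of their type bit (`x ↦ x + 1` in `ZMod 2`), player `4` always answers `1`. -/
def notNotNotNotOne : ZMod 5 → ZMod 2 → ZMod 2 :=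
  fun i x => if i = 4 then 1 else x + 1

/-! A player's local function acts separately on its two type bits, so its expected payoff
splits, bit by bit, into (number of types with that bit won by its answer) × (value of the
answer). Against the other four fixed strategies, a deviation therefore only has to be compared
bit by bit with the profile's answer, which is a finite count. The profile wins on every type
except `T₄`, where the three involved players all answer `1`; this gives the payoffs. -/

def play (f : ZMod 5 → ZMod 2 → ZMod 2) (t : C5Type) : ZMod 5 → ZMod 2 :=
  fun i => f i (inputBit t i)

def Wins (s : ZMod 5 → ZMod 2) (t : C5Type) : Prop :=
  ∑ k ∈ involvedSet t, s k = targetBit t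

instance (s : ZMod 5 → ZMod 2) (t : C5Type) : Decidable (Wins s t) :=
  inferInstanceAs (Decidable (_ = _))

def answerValue (v0 v1 : ℝ) (x : ZMod 2) : ℝ :=
  if x = 1 then v1 else v0

@[simp] theorem answerValue_zero (v0 v1 : ℝ) : answerValue v0 v1 0 = v0 := rfl

@[simp] theorem answerValue_one (v0 v1 : ℝ) : answerValue v0 v1 1 = v1 := rfl

theorem answerValue_nonneg {v0 v1 : ℝ} (hv0 : 0 ≤ v0) (hv01 : v0 ≤ v1) (x : ZMod 2) :
    0 ≤ answerValue v0 v1 x := by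
  unfold answerValue
  split_ifs <;> linarith

theorem payoffOf_eq_ite (v0 v1 : ℝ) (j : ZMod 5) (s : ZMod 5 → ZMod 2) (t : C5Type) :
    payoffOf v0 v1 j s t = if Wins s t then answerValue v0 v1 (s j) else 0 :=
  rfl

theorem pureUtil_eq_sum_play (v0 v1 : ℝ) (f : ZMod 5 → ZMod 2 → ZMod 2) (j : ZMod 5) :
    pureUtil v0 v1 f j = (∑ t, payoffOf v0 v1 j (play f t) t) / 6 :=
  rfl

theorem play_update (f : ZMod 5 → ZMod 2 → ZMod 2) (j : ZMod 5) (g : ZMod 2 → ZMod 2)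
    (t : C5Type) :
    play (Function.update f j g) t = Function.update (play f t) j (g (inputBit t j)) := by
  ext i
  by_cases hi : i = j
  · subst hi
    simp [play]
  · simp [play, hi]

theorem sum_zmod_two {M : Type*} [AddCommMonoid M] (F : ZMod 2 → M) : ∑ b, F b = F 0 + F 1 :=
  Fin.sum_univ_two F

def winCount (f : ZMod 5 → ZMod 2 → ZMod 2) (j : ZMod 5) (b x : ZMod 2) : ℕ :=
  #{t | inputBit t j = b ∧ Wins (Function.update (play f t) j x) t}

theorem pureUtil_update_eq_sum_winCount (v0 v1 : ℝ) (f : ZMod 5 → ZMod 2 → ZMod 2)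
    (j : ZMod 5) (g : ZMod 2 → ZMod 2) :
    pureUtil v0 v1 (Function.update f j g) j =
      (∑ b, winCount f j b (g b) * answerValue v0 v1 (g b)) / 6 := by
  rw [pureUtil_eq_sum_play, ← sum_fiberwise univ (fun t => inputBit t j)]
  congr 1
  refine sum_congr rfl fun b _ => ?_
  rw [winCount, card_filter, Nat.cast_sum, sum_mul, sum_filter]
  refine sum_congr rfl fun t _ => ?_
  rw [play_update, payoffOf_eq_ite]
  by_cases hb : inputBit t j = b <;> simp [hb]

theorem pureUtil_eq_sum_winCount (v0 v1 : ℝ) (f : ZMod 5 → ZMod 2 → ZMod 2) (j : ZMod 5) :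
    pureUtil v0 v1 f j = (∑ b, winCount f j b (f j b) * answerValue v0 v1 (f j b)) / 6 := by
  simpa using pureUtil_update_eq_sum_winCount v0 v1 f j (f j)

/-- Since `0 ≤ v0 ≤ v1`, this makes `f j b` a best answer on bit `b` whatever the values. -/
def IsBestAnswer (f : ZMod 5 → ZMod 2 → ZMod 2) (j : ZMod 5) (b : ZMod 2) : Prop :=
  (f j b = 1 ∧ winCount f j b 0 ≤ winCount f j b 1) ∨ winCount f j b (f j b + 1) = 0

theorem winCount_mul_le_of_isBestAnswer {v0 v1 : ℝ} (hv0 : 0 ≤ v0) (hv01 : v0 ≤ v1)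
    {f : ZMod 5 → ZMod 2 → ZMod 2} {j : ZMod 5} {b : ZMod 2} (h : IsBestAnswer f j b)
    (x : ZMod 2) :
    winCount f j b x * answerValue v0 v1 x ≤
      winCount f j b (f j b) * answerValue v0 v1 (f j b) := by
  obtain rfl | hx := eq_or_ne x (f j b)
  · rfl
  obtain rfl : x = f j b + 1 := by
    revert hx
    generalize f j b = y
    revert x y
    decide
  rcases h with ⟨h1, hle⟩ | h0
  · rw [h1]
    simp only [show (1 + 1 : ZMod 2) = 0 from rfl, answerValue_zero, answerValue_one]
    exact mul_le_mul (by exact_mod_cast hle) hv01 hv0 (Nat.cast_nonneg _)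
  · rw [h0, Nat.cast_zero, zero_mul]
    exact mul_nonneg (Nat.cast_nonneg _) (answerValue_nonneg hv0 hv01 _)

theorem isNashEq_of_forall_isBestAnswer {v0 v1 : ℝ} (hv0 : 0 ≤ v0) (hv01 : v0 ≤ v1)
    {f : ZMod 5 → ZMod 2 → ZMod 2} (h : ∀ j b, IsBestAnswer f j b) : IsNashEq v0 v1 f := by
  intro j g
  rw [pureUtil_update_eq_sum_winCount, pureUtil_eq_sum_winCount]
  refine div_le_div_of_nonneg_right (sum_le_sum fun b _ => ?_) (by norm_num)
  exact winCount_mul_le_of_isBestAnswer hv0 hv01 (h j b) (g b)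

theorem isBestAnswer_notNotNotNotOne (j : ZMod 5) (b : ZMod 2) :
    IsBestAnswer notNotNotNotOne j b := by
  unfold IsBestAnswer
  revert j b
  decide

theorem pureUtil_notNotNotNotOne_of_ne_four (v0 v1 : ℝ) {i : ZMod 5} (hi : i ≠ 4) :
    pureUtil v0 v1 notNotNotNotOne i = (2 * v0 + 3 * v1) / 6 := by
  have hf : notNotNotNotOne i 0 = 1 ∧ notNotNotNotOne i 1 = 0 := by
    simp only [notNotNotNotOne, hi, if_false]
    decide
  have hcount : winCount notNotNotNotOne i 0 1 = 3 ∧ winCount notNotNotNotOne i 1 0 = 2 := by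
    revert i
    decide
  rw [pureUtil_eq_sum_winCount, sum_zmod_two, hf.1, hf.2, hcount.1, hcount.2]
  simp only [answerValue_zero, answerValue_one, Nat.cast_ofNat]
  ring

theorem pureUtil_notNotNotNotOne_four (v0 v1 : ℝ) :
    pureUtil v0 v1 notNotNotNotOne 4 = 5 * v1 / 6 := by
  have hf : ∀ b, notNotNotNotOne 4 b = 1 := fun _ => if_pos rfl
  have hcount : winCount notNotNotNotOne 4 0 1 = 4 ∧ winCount notNotNotNotOne 4 1 1 = 1 := by
    decide
  rw [pureUtil_eq_sum_winCount, sum_zmod_two, hf, hf, hcount.1, hcount.2]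
  simp only [answerValue_one, Nat.cast_ofNat, Nat.cast_one]
  ring

/-- **The profile `(NOT, NOT, NOT, NOT, 1)` is a Nash equilibrium of `NC₀₀(C₅)`.**
For all `0 ≤ v0 ≤ v1` it is a Nash equilibrium under the uniform type
distribution; players `0,1,2,3` each get expected payoff `(2 v0 + 3 v1)/6` and
player `4` gets `5 v1 / 6`. -/
theorem notNotNotNotOne_nash_NC00 (v0 v1 : ℝ) (hv0 : 0 ≤ v0) (hv01 : v0 ≤ v1) :
    IsNashEq v0 v1 notNotNotNotOne ∧
    (∀ i : ZMod 5, i ≠ 4 → pureUtil v0 v1 notNotNotNotOne i = (2 * v0 + 3 * v1) / 6) ∧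
    pureUtil v0 v1 notNotNotNotOne 4 = 5 * v1 / 6 :=
  ⟨isNashEq_of_forall_isBestAnswer hv0 hv01 isBestAnswer_notNotNotNotOne,
    fun _ hi => pureUtil_notNotNotNotOne_of_ne_four v0 v1 hi,
    pureUtil_notNotNotNotOne_four v0 v1⟩
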